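/- arXiv:2212.02933 — 3 statements merged into one kernel-verified Lean document; each statement's English description precedes it below -/
import Mathlib

section
/- Let P and Q be nonempty compact convex sets in a real inner product space with diameters D_P and D_Q, let D = √(D_P² + D_Q²), and set c = (D_P + D_Q + dist(P, Q)) · max{D_P, D_Q} + 2D². Consider the Alternating Linear Minimizations iterates with short steps: x₀ ∈ P, y₀ ∈ Q, and for t ≥ 0, u_t ∈ P minimizes ⟨x_t − y_t, x⟩ over P, γ_{t,1} = min{⟨x_t − y_t, x_t − u_t⟩/‖x_t − u_t‖², 1}, x_{t+1} = x_t + γ_{t,1}(u_t − x_t); v_t ∈ Q minimizes ⟨y_t − x_{t+1}, y⟩ over Q, γ_{t,2} = min{⟨y_t − x_{t+1}, y_t − v_t⟩/‖y_t − v_t‖², 1}, y_{t+1} = y_t + γ_{t,2}(v_t − y_t). Then with z_t = (x_t + y_t)/2, for every t ≥ 0: max{dist(z_t, P)², dist(z_t, Q)²} ≤ ‖x_t − y_t‖²/4 ≤ 4c/(t + 4) + dist(P, Q)²/4. -/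
/-!
For `xs ∈ P`, `ys ∈ Q` write `h_t = ‖x_t - y_t‖² - ‖xs - ys‖²`. Each half-iteration is a
Frank–Wolfe short step for `‖· - y_t‖²` on `P` (resp. `‖x_{t+1} - ·‖²` on `Q`): it decreases the
squared distance by at least the square of its Frank–Wolfe gap over
`K = (D_P + D_Q + ‖xs - ys‖) max{D_P, D_Q}`, and moves the iterate by at most the square root of
that decrease. Convexity of `‖·‖²` bounds `h_t` by twice the sum of the two gaps plus a term for
the movement of `x`, whence `h_t² ≤ 16 c (h_t - h_{t+1})` whenever `h_t ≥ 0`, and this recursion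
gives `h_t ≤ 16 c / (t + 4)`.
-/

open RealInnerProductSpace Metric

section ShortStep

variable {G : Type*} [NormedAddCommGroup G] [InnerProductSpace ℝ G]

/-- The minimizer of `‖g - γ • d‖²` over `γ ∈ [0, 1]` when `0 ≤ ⟪g, d⟫`. -/
noncomputable def shortStep (g d : G) : ℝ := min (⟪g, d⟫ / ‖d‖ ^ 2) 1

variable {g d : G}

lemma shortStep_nonneg (h : 0 ≤ ⟪g, d⟫) : 0 ≤ shortStep g d :=
  le_min (div_nonneg h (sq_nonneg _)) zero_le_one

lemma shortStep_le_one : shortStep g d ≤ 1 := min_le_right _ _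

lemma shortStep_mul_norm_sq_le (h : 0 ≤ ⟪g, d⟫) : shortStep g d * ‖d‖ ^ 2 ≤ ⟪g, d⟫ := by
  rcases (sq_nonneg ‖d‖).eq_or_lt with hd | hd
  · rwa [← hd, mul_zero]
  · exact (le_div_iff₀ hd).1 (min_le_left _ _)

lemma norm_sq_sub_norm_sq_le_two_inner (g m : G) : ‖g‖ ^ 2 - ‖m‖ ^ 2 ≤ 2 * ⟪g, g - m⟫ := by
  rw [inner_sub_right, real_inner_self_eq_norm_sq]
  nlinarith [norm_sub_sq_real g m, sq_nonneg ‖g - m‖]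

lemma norm_sub_smul_sq (g d : G) (γ : ℝ) :
    ‖g - γ • d‖ ^ 2 = ‖g‖ ^ 2 - 2 * γ * ⟪g, d⟫ + γ ^ 2 * ‖d‖ ^ 2 := by
  rw [norm_sub_sq_real, real_inner_smul_right, norm_smul, Real.norm_eq_abs, mul_pow, sq_abs]
  ring

lemma norm_shortStep_smul_sq_le (h : 0 ≤ ⟪g, d⟫) :
    ‖shortStep g d • d‖ ^ 2 ≤ ‖g‖ ^ 2 - ‖g - shortStep g d • d‖ ^ 2 := by
  have hγ := shortStep_nonneg h
  have hγd := shortStep_mul_norm_sq_le h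
  rw [norm_sub_smul_sq, norm_smul, mul_pow, Real.norm_eq_abs, sq_abs]
  nlinarith

lemma inner_sq_le_mul_sub_norm_sub_shortStep_smul_sq (h : 0 ≤ ⟪g, d⟫) {δ R : ℝ}
    (hd : ‖d‖ ≤ δ) (hg : ‖g‖ ≤ R) (hδR : δ ≤ R) :
    ⟪g, d⟫ ^ 2 ≤ R * δ * (‖g‖ ^ 2 - ‖g - shortStep g d • d‖ ^ 2) := by
  have hδ : 0 ≤ δ := (norm_nonneg d).trans hd
  have hdK : ‖d‖ ^ 2 ≤ R * δ := by nlinarith [norm_nonneg d]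
  have hgK : ⟪g, d⟫ ≤ R * δ :=
    (real_inner_le_norm g d).trans (mul_le_mul hg hd (norm_nonneg d) (hδ.trans hδR))
  rw [norm_sub_smul_sq, shortStep]
  rcases (sq_nonneg ‖d‖).eq_or_lt with hd0 | hd0
  · have : d = 0 := by simpa using hd0.symm
    simp [this]
  by_cases hle : ⟪g, d⟫ ≤ ‖d‖ ^ 2
  · rw [min_eq_left ((div_le_one hd0).2 hle)]
    have hΔ : 2 * (⟪g, d⟫ / ‖d‖ ^ 2) * ⟪g, d⟫ - (⟪g, d⟫ / ‖d‖ ^ 2) ^ 2 * ‖d‖ ^ 2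
        = ⟪g, d⟫ ^ 2 / ‖d‖ ^ 2 := by field_simp; ring
    rw [sub_add, hΔ, sub_sub_cancel, mul_div_assoc', le_div_iff₀ hd0]
    nlinarith [mul_le_mul_of_nonneg_left hdK (sq_nonneg ⟪g, d⟫)]
  · rw [min_eq_right ((one_le_div hd0).2 (not_le.1 hle).le)]
    nlinarith

end ShortStep

section ShortStepUpdate

variable {G : Type*} [NormedAddCommGroup G] [InnerProductSpace ℝ G] {S : Set G} {p q w : G}

/-- The Frank–Wolfe step with short step size for `‖· - q‖²`, from `p` towards the linear
minimizer `w`. -/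
noncomputable def shortStepUpdate (p q w : G) : G := p + shortStep (p - q) (p - w) • (w - p)

lemma inner_sub_le_of_forall_inner_le (hw : ∀ z ∈ S, ⟪p - q, w⟫ ≤ ⟪p - q, z⟫) {z : G}
    (hz : z ∈ S) : ⟪p - q, p - z⟫ ≤ ⟪p - q, p - w⟫ := by
  rw [inner_sub_right, inner_sub_right]
  linarith [hw z hz]

lemma inner_sub_nonneg_of_forall_inner_le (hw : ∀ z ∈ S, ⟪p - q, w⟫ ≤ ⟪p - q, z⟫)
    (hp : p ∈ S) : 0 ≤ ⟪p - q, p - w⟫ := by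
  simpa using inner_sub_le_of_forall_inner_le hw hp

lemma shortStepUpdate_mem (hS : Convex ℝ S) (hp : p ∈ S) (hw : w ∈ S)
    (hgap : 0 ≤ ⟪p - q, p - w⟫) : shortStepUpdate p q w ∈ S :=
  hS.add_smul_sub_mem hp hw ⟨shortStep_nonneg hgap, shortStep_le_one⟩

lemma shortStepUpdate_sub_right :
    shortStepUpdate p q w - q = (p - q) - shortStep (p - q) (p - w) • (p - w) := by
  unfold shortStepUpdate
  module

lemma norm_shortStepUpdate_sub_sq_le (hgap : 0 ≤ ⟪p - q, p - w⟫) :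
    ‖shortStepUpdate p q w - p‖ ^ 2 ≤ ‖p - q‖ ^ 2 - ‖shortStepUpdate p q w - q‖ ^ 2 := by
  have hmove : shortStepUpdate p q w - p = -(shortStep (p - q) (p - w) • (p - w)) := by
    unfold shortStepUpdate
    module
  rw [hmove, norm_neg, shortStepUpdate_sub_right]
  exact norm_shortStep_smul_sq_le hgap

lemma inner_sq_le_mul_sub_norm_shortStepUpdate_sub_sq (hgap : 0 ≤ ⟪p - q, p - w⟫) {δ R : ℝ}
    (hd : ‖p - w‖ ≤ δ) (hg : ‖p - q‖ ≤ R) (hδR : δ ≤ R) :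
    ⟪p - q, p - w⟫ ^ 2 ≤ R * δ * (‖p - q‖ ^ 2 - ‖shortStepUpdate p q w - q‖ ^ 2) := by
  rw [shortStepUpdate_sub_right]
  exact inner_sq_le_mul_sub_norm_sub_shortStep_smul_sq hgap hd hg hδR

end ShortStepUpdate

lemma sq_le_of_le_two_mul_add {s a b r D K X Y : ℝ} (hs : 0 ≤ s)
    (hsab : s ≤ 2 * (a + b + r * D)) (ha : a ^ 2 ≤ K * X) (hb : b ^ 2 ≤ K * Y) (hr : r ^ 2 ≤ X)
    (hY : 0 ≤ Y) : s ^ 2 ≤ 12 * (K + D ^ 2) * (X + Y) := by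
  have hrD : (r * D) ^ 2 ≤ X * D ^ 2 := by
    rw [mul_pow]
    exact mul_le_mul_of_nonneg_right hr (sq_nonneg D)
  calc s ^ 2 ≤ (2 * (a + b + r * D)) ^ 2 := pow_le_pow_left₀ hs hsab 2
    _ ≤ 12 * (a ^ 2 + b ^ 2 + (r * D) ^ 2) := by
      nlinarith [sq_nonneg (a - b), sq_nonneg (a - r * D), sq_nonneg (b - r * D)]
    _ ≤ 12 * (K + D ^ 2) * (X + Y) := by nlinarith [mul_nonneg hY (sq_nonneg D)]

lemma sq_sub_sq_le_of_le_add_add {n a b M : ℝ} (ha : 0 ≤ a) (hb : 0 ≤ b) (hM : 0 ≤ M)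
    (hn0 : 0 ≤ n) (hn : n ≤ a + b + M) :
    n ^ 2 - M ^ 2 ≤ 4 * ((a + b + M) * max a b + 2 * (a ^ 2 + b ^ 2)) := by
  have hR : 0 ≤ a + b + M := by positivity
  nlinarith [pow_le_pow_left₀ hn0 hn 2, sq_nonneg (a - b),
    mul_le_mul_of_nonneg_left (le_max_left a b) hR, mul_le_mul_of_nonneg_left (le_max_right a b) hR]

lemma le_div_add_four_of_sq_le_mul_sub {a : ℕ → ℝ} {m : ℝ} (hm : 0 ≤ m) (h0 : a 0 ≤ m / 4)
    (hanti : ∀ n, a (n + 1) ≤ a n) (hstep : ∀ n, 0 < a n → a n ^ 2 ≤ m * (a n - a (n + 1))) :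
    ∀ n : ℕ, a n ≤ m / (n + 4)
  | 0 => by simpa using h0
  | n + 1 => by
    have ih := le_div_add_four_of_sq_le_mul_sub hm h0 hanti hstep n
    have hn : (0 : ℝ) < n + 4 := by positivity
    rw [Nat.cast_succ, add_right_comm, le_div_iff₀ (by positivity)]
    rcases le_or_gt (a n) 0 with hneg | hpos
    · nlinarith [hanti n]
    · rw [le_div_iff₀ hn] at ih
      have hdecr := hstep n hpos
      -- `s ↦ s - s² / m` is increasing on `[0, m / 2]`, and `(n + 3) (n + 5) ≤ (n + 4)²`.
      nlinarith [mul_nonneg (mul_nonneg hpos.le (sub_nonneg.2 ih)) (by linarith : (0:ℝ) ≤ n + 3),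
        sq_nonneg (m - a n * (n + 4))]

lemma infDist_midpoint_sq_le {E : Type*} [NormedAddCommGroup E] [NormedSpace ℝ E] {S : Set E}
    {p q : E} (hp : p ∈ S) : infDist ((2 : ℝ)⁻¹ • (p + q)) S ^ 2 ≤ ‖p - q‖ ^ 2 / 4 := by
  have hdist : dist ((2 : ℝ)⁻¹ • (p + q)) p = ‖p - q‖ / 2 := by
    rw [dist_eq_norm, show (2 : ℝ)⁻¹ • (p + q) - p = (2 : ℝ)⁻¹ • (q - p) by module, norm_smul,
      norm_sub_rev]
    norm_num
    ring
  calc infDist ((2 : ℝ)⁻¹ • (p + q)) S ^ 2 ≤ (‖p - q‖ / 2) ^ 2 :=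
        pow_le_pow_left₀ infDist_nonneg (hdist ▸ infDist_le_dist_of_mem hp) 2
    _ = ‖p - q‖ ^ 2 / 4 := by ring

lemma dist_le_diam_add_diam_add_dist {α : Type*} [PseudoMetricSpace α] {P Q : Set α}
    (hP : Bornology.IsBounded P) (hQ : Bornology.IsBounded Q) {p p₀ q q₀ : α} (hp : p ∈ P)
    (hp₀ : p₀ ∈ P) (hq : q ∈ Q) (hq₀ : q₀ ∈ Q) : dist p q ≤ diam P + diam Q + dist p₀ q₀ :=
  calc dist p q ≤ diam (P ∪ Q) := dist_le_diam_of_mem (hP.union hQ) (.inl hp) (.inr hq)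
    _ ≤ diam P + dist p₀ q₀ + diam Q := diam_union hp₀ hq₀
    _ = diam P + diam Q + dist p₀ q₀ := by ring

section ALM

variable {G : Type*} [NormedAddCommGroup G] [InnerProductSpace ℝ G]

/-- Iterates of Alternating Linear Minimizations (ALM) with short steps. -/
structure IsALMShortStep (P Q : Set G) (x y u v : ℕ → G) : Prop where
  x_zero_mem : x 0 ∈ P
  y_zero_mem : y 0 ∈ Q
  u_mem : ∀ t, u t ∈ P
  u_min : ∀ t, ∀ w ∈ P, ⟪x t - y t, u t⟫ ≤ ⟪x t - y t, w⟫
  x_succ : ∀ t, x (t + 1) = shortStepUpdate (x t) (y t) (u t)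
  v_mem : ∀ t, v t ∈ Q
  v_min : ∀ t, ∀ w ∈ Q, ⟪y t - x (t + 1), v t⟫ ≤ ⟪y t - x (t + 1), w⟫
  y_succ : ∀ t, y (t + 1) = shortStepUpdate (y t) (x (t + 1)) (v t)

namespace IsALMShortStep

variable {P Q : Set G} {x y u v : ℕ → G}

lemma mem (h : IsALMShortStep P Q x y u v) (hP : Convex ℝ P) (hQ : Convex ℝ Q) :
    ∀ t, x t ∈ P ∧ y t ∈ Q
  | 0 => ⟨h.x_zero_mem, h.y_zero_mem⟩
  | t + 1 => by
    obtain ⟨hx, hy⟩ := mem h hP hQ t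
    have hx' : x (t + 1) ∈ P := h.x_succ t ▸ shortStepUpdate_mem hP hx (h.u_mem t)
      (inner_sub_nonneg_of_forall_inner_le (h.u_min t) hx)
    exact ⟨hx', h.y_succ t ▸ shortStepUpdate_mem hQ hy (h.v_mem t)
      (inner_sub_nonneg_of_forall_inner_le (h.v_min t) hy)⟩

lemma norm_sub_succ_sq_le (h : IsALMShortStep P Q x y u v) (hP : Convex ℝ P)
    (hQ : Convex ℝ Q) (t : ℕ) : ‖x (t + 1) - y (t + 1)‖ ^ 2 ≤ ‖x t - y t‖ ^ 2 := by
  obtain ⟨hx, hy⟩ := h.mem hP hQ t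
  have hdx := norm_shortStepUpdate_sub_sq_le (inner_sub_nonneg_of_forall_inner_le (h.u_min t) hx)
  have hdy := norm_shortStepUpdate_sub_sq_le (inner_sub_nonneg_of_forall_inner_le (h.v_min t) hy)
  rw [← h.x_succ t] at hdx
  rw [← h.y_succ t, norm_sub_rev (y t) (x (t + 1)), norm_sub_rev (y (t + 1)) (x (t + 1))] at hdy
  linarith [sq_nonneg ‖x (t + 1) - x t‖, sq_nonneg ‖y (t + 1) - y t‖]

lemma norm_sub_sq_sub_norm_sub_sq_le (h : IsALMShortStep P Q x y u v) (hP : Convex ℝ P)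
    (hQ : Convex ℝ Q) (hQb : Bornology.IsBounded Q) {xs ys : G} (hxs : xs ∈ P) (hys : ys ∈ Q)
    (t : ℕ) : ‖x t - y t‖ ^ 2 - ‖xs - ys‖ ^ 2 ≤ 2 * (⟪x t - y t, x t - u t⟫ +
      ⟪y t - x (t + 1), y t - v t⟫ + ‖x (t + 1) - x t‖ * diam Q) := by
  obtain ⟨hx, hy⟩ := h.mem hP hQ t
  have hconvex := norm_sq_sub_norm_sq_le_two_inner (x t - y t) (xs - ys)
  have hsplit : ⟪x t - y t, (x t - y t) - (xs - ys)⟫ = ⟪x t - y t, x t - xs⟫ +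
      ⟪y t - x (t + 1), y t - ys⟫ + ⟪x (t + 1) - x t, y t - ys⟫ := by
    simp only [inner_sub_left, inner_sub_right, real_inner_comm]
    ring
  have hPgap := inner_sub_le_of_forall_inner_le (h.u_min t) hxs
  have hQgap := inner_sub_le_of_forall_inner_le (h.v_min t) hys
  have hmove : ⟪x (t + 1) - x t, y t - ys⟫ ≤ ‖x (t + 1) - x t‖ * diam Q :=
    (real_inner_le_norm _ _).trans <| mul_le_mul_of_nonneg_left
      (dist_eq_norm (y t) ys ▸ dist_le_diam_of_mem hQb hy hys) (norm_nonneg _)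
  linarith

lemma sq_le_mul_norm_sub_sq_sub (h : IsALMShortStep P Q x y u v) (hP : Convex ℝ P)
    (hQ : Convex ℝ Q) (hPb : Bornology.IsBounded P) (hQb : Bornology.IsBounded Q) {xs ys : G}
    (hxs : xs ∈ P) (hys : ys ∈ Q) (t : ℕ) (hpos : 0 ≤ ‖x t - y t‖ ^ 2 - ‖xs - ys‖ ^ 2) :
    (‖x t - y t‖ ^ 2 - ‖xs - ys‖ ^ 2) ^ 2 ≤
      12 * ((diam P + diam Q + ‖xs - ys‖) * max (diam P) (diam Q) + diam Q ^ 2) *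
        (‖x t - y t‖ ^ 2 - ‖x (t + 1) - y (t + 1)‖ ^ 2) := by
  obtain ⟨hx, hy⟩ := h.mem hP hQ t
  have hx' := (h.mem hP hQ (t + 1)).1
  have hR : ∀ p ∈ P, ∀ q ∈ Q, ‖p - q‖ ≤ diam P + diam Q + ‖xs - ys‖ := fun p hp q hq => by
    simpa only [dist_eq_norm] using dist_le_diam_add_diam_add_dist hPb hQb hp hxs hq hys
  have hmax : max (diam P) (diam Q) ≤ diam P + diam Q + ‖xs - ys‖ :=
    max_le (by linarith [diam_nonneg (s := Q), norm_nonneg (xs - ys)])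
      (by linarith [diam_nonneg (s := P), norm_nonneg (xs - ys)])
  have hPu : ‖x t - u t‖ ≤ max (diam P) (diam Q) :=
    (dist_eq_norm (x t) _ ▸ dist_le_diam_of_mem hPb hx (h.u_mem t)).trans (le_max_left _ _)
  have hQv : ‖y t - v t‖ ≤ max (diam P) (diam Q) :=
    (dist_eq_norm (y t) _ ▸ dist_le_diam_of_mem hQb hy (h.v_mem t)).trans (le_max_right _ _)
  have hgx := inner_sub_nonneg_of_forall_inner_le (h.u_min t) hx
  have hgy := inner_sub_nonneg_of_forall_inner_le (h.v_min t) hy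
  have hax := inner_sq_le_mul_sub_norm_shortStepUpdate_sub_sq hgx hPu (hR _ hx _ hy) hmax
  have hby := inner_sq_le_mul_sub_norm_shortStepUpdate_sub_sq hgy hQv
    (norm_sub_rev (y t) _ ▸ hR _ hx' _ hy) hmax
  have hdx := norm_shortStepUpdate_sub_sq_le hgx
  have hdy := norm_shortStepUpdate_sub_sq_le hgy
  rw [← h.x_succ t] at hax hdx
  rw [← h.y_succ t] at hby hdy
  have hsplit : ‖x t - y t‖ ^ 2 - ‖x (t + 1) - y (t + 1)‖ ^ 2 =
      (‖x t - y t‖ ^ 2 - ‖x (t + 1) - y t‖ ^ 2) +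
        (‖y t - x (t + 1)‖ ^ 2 - ‖y (t + 1) - x (t + 1)‖ ^ 2) := by
    rw [norm_sub_rev (y t), norm_sub_rev (y (t + 1))]
    ring
  rw [hsplit]
  exact sq_le_of_le_two_mul_add hpos (h.norm_sub_sq_sub_norm_sub_sq_le hP hQ hQb hxs hys t)
    hax hby hdx ((sq_nonneg _).trans hdy)

lemma norm_sub_sq_sub_le (h : IsALMShortStep P Q x y u v) (hP : Convex ℝ P) (hQ : Convex ℝ Q)
    (hPb : Bornology.IsBounded P) (hQb : Bornology.IsBounded Q) {xs ys : G} (hxs : xs ∈ P)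
    (hys : ys ∈ Q) (t : ℕ) :
    ‖x t - y t‖ ^ 2 - ‖xs - ys‖ ^ 2 ≤ 16 * ((diam P + diam Q + ‖xs - ys‖) *
      max (diam P) (diam Q) + 2 * (diam P ^ 2 + diam Q ^ 2)) / (t + 4) := by
  set K := (diam P + diam Q + ‖xs - ys‖) * max (diam P) (diam Q)
  have hK : 0 ≤ K := by positivity
  have hm : 12 * (K + diam Q ^ 2) ≤ 16 * (K + 2 * (diam P ^ 2 + diam Q ^ 2)) := by
    nlinarith [sq_nonneg (diam P)]
  have hbase : ‖x 0 - y 0‖ ≤ diam P + diam Q + ‖xs - ys‖ := by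
    simpa only [dist_eq_norm] using
      dist_le_diam_add_diam_add_dist hPb hQb h.x_zero_mem hxs h.y_zero_mem hys
  refine le_div_add_four_of_sq_le_mul_sub (a := fun t => ‖x t - y t‖ ^ 2 - ‖xs - ys‖ ^ 2)
    (by positivity) ?_ (fun t => by simpa using h.norm_sub_succ_sq_le hP hQ t) (fun t ht => ?_) t
  · rw [mul_div_right_comm, show (16 : ℝ) / 4 = 4 by norm_num]
    exact sq_sub_sq_le_of_le_add_add diam_nonneg diam_nonneg (norm_nonneg _) (norm_nonneg _) hbase
  · rw [sub_sub_sub_cancel_right]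
    exact (h.sq_le_mul_norm_sub_sq_sub hP hQ hPb hQb hxs hys t ht.le).trans
      (mul_le_mul_of_nonneg_right hm (sub_nonneg.2 (h.norm_sub_succ_sq_le hP hQ t)))

end IsALMShortStep

end ALM

theorem alm_short_step_primal_rate_general
    {G : Type*} [NormedAddCommGroup G] [InnerProductSpace ℝ G]
    (P Q : Set G)
    (hPcpt : IsCompact P) (hQcpt : IsCompact Q)
    (hPconv : Convex ℝ P) (hQconv : Convex ℝ Q)
    (DP DQ : ℝ) (hDP : Metric.diam P = DP) (hDQ : Metric.diam Q = DQ)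
    (xs ys : G) (hxs : xs ∈ P) (hys : ys ∈ Q)
    (D c : ℝ) (hDdef : D = Real.sqrt (DP ^ 2 + DQ ^ 2))
    (hc : c = (DP + DQ + ‖xs - ys‖) * max DP DQ + 2 * D ^ 2)
    (x y u v : ℕ → G) (hx0 : x 0 ∈ P) (hy0 : y 0 ∈ Q)
    (humem : ∀ t : ℕ, u t ∈ P)
    (humin : ∀ t : ℕ, ∀ w ∈ P, ⟪x t - y t, u t⟫ ≤ ⟪x t - y t, w⟫)
    (hxupd : ∀ t : ℕ, x (t + 1) = x t +
      (min (⟪x t - y t, x t - u t⟫ / ‖x t - u t‖ ^ 2) 1) • (u t - x t))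
    (hvmem : ∀ t : ℕ, v t ∈ Q)
    (hvmin : ∀ t : ℕ, ∀ w ∈ Q, ⟪y t - x (t + 1), v t⟫ ≤ ⟪y t - x (t + 1), w⟫)
    (hyupd : ∀ t : ℕ, y (t + 1) = y t +
      (min (⟪y t - x (t + 1), y t - v t⟫ / ‖y t - v t‖ ^ 2) 1) • (v t - y t)) :
    ∀ t : ℕ,
      max (infDist ((2 : ℝ)⁻¹ • (x t + y t)) P ^ 2)
          (infDist ((2 : ℝ)⁻¹ • (x t + y t)) Q ^ 2) ≤ ‖x t - y t‖ ^ 2 / 4 ∧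
      ‖x t - y t‖ ^ 2 / 4 ≤ 4 * c / ((t : ℝ) + 4) + ‖xs - ys‖ ^ 2 / 4 := by
  have h : IsALMShortStep P Q x y u v := ⟨hx0, hy0, humem, humin, hxupd, hvmem, hvmin, hyupd⟩
  subst hDP hDQ hDdef hc
  rw [Real.sq_sqrt (by positivity)]
  intro t
  obtain ⟨hxt, hyt⟩ := h.mem hPconv hQconv t
  refine ⟨max_le (infDist_midpoint_sq_le hxt) ?_, ?_⟩
  · rw [add_comm, norm_sub_rev]
    exact infDist_midpoint_sq_le hyt
  · have hrate := h.norm_sub_sq_sub_le hPconv hQconv hPcpt.isBounded hQcpt.isBounded hxs hys t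
    rw [mul_div_assoc] at hrate ⊢
    linarith

/-- **Primal convergence of Alternating Linear Minimizations** with the short-step
rule: with `z_t = (x_t + y_t)/2` and
`c = (D_P + D_Q + dist(P,Q)) max{D_P, D_Q} + 2D²`, `D = √(D_P² + D_Q²)`,
`max{dist(z_t,P)², dist(z_t,Q)²} ≤ ‖x_t − y_t‖²/4 ≤ 4c/(t+4) + dist(P,Q)²/4`. -/
theorem alm_short_step_primal_rate
    {G : Type*} [NormedAddCommGroup G] [InnerProductSpace ℝ G]
    (P Q : Set G) (hPne : P.Nonempty) (hQne : Q.Nonempty)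
    (hPcpt : IsCompact P) (hQcpt : IsCompact Q)
    (hPconv : Convex ℝ P) (hQconv : Convex ℝ Q)
    (DP DQ : ℝ) (hDP : Metric.diam P = DP) (hDQ : Metric.diam Q = DQ)
    (xs ys : G) (hxs : xs ∈ P) (hys : ys ∈ Q)
    (hmin : ∀ p ∈ P, ∀ q ∈ Q, ‖xs - ys‖ ≤ ‖p - q‖)
    (D c : ℝ) (hDdef : D = Real.sqrt (DP ^ 2 + DQ ^ 2))
    (hc : c = (DP + DQ + ‖xs - ys‖) * max DP DQ + 2 * D ^ 2)
    (x y u v : ℕ → G) (hx0 : x 0 ∈ P) (hy0 : y 0 ∈ Q)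
    (humem : ∀ t : ℕ, u t ∈ P)
    (humin : ∀ t : ℕ, ∀ w ∈ P, ⟪x t - y t, u t⟫ ≤ ⟪x t - y t, w⟫)
    (hxupd : ∀ t : ℕ, x (t + 1) = x t +
      (min (⟪x t - y t, x t - u t⟫ / ‖x t - u t‖ ^ 2) 1) • (u t - x t))
    (hvmem : ∀ t : ℕ, v t ∈ Q)
    (hvmin : ∀ t : ℕ, ∀ w ∈ Q, ⟪y t - x (t + 1), v t⟫ ≤ ⟪y t - x (t + 1), w⟫)
    (hyupd : ∀ t : ℕ, y (t + 1) = y t +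
      (min (⟪y t - x (t + 1), y t - v t⟫ / ‖y t - v t‖ ^ 2) 1) • (v t - y t)) :
    ∀ t : ℕ,
      max (infDist ((2 : ℝ)⁻¹ • (x t + y t)) P ^ 2)
          (infDist ((2 : ℝ)⁻¹ • (x t + y t)) Q ^ 2) ≤ ‖x t - y t‖ ^ 2 / 4 ∧
      ‖x t - y t‖ ^ 2 / 4 ≤ 4 * c / ((t : ℝ) + 4) + ‖xs - ys‖ ^ 2 / 4 :=
  alm_short_step_primal_rate_general P Q hPcpt hQcpt hPconv hQconv DP DQ hDP hDQ xs ys hxs hys D c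
    hDdef hc x y u v hx0 hy0 humem humin hxupd hvmem hvmin hyupd
end

section
/- Let P and Q be disjoint nonempty compact convex sets in a real inner product space with diameters D_P and D_Q. Consider the Alternating Linear Minimizations iterates with agnostic steps γ_{t,1} = γ_{t,2} = 2/(t+2): x₀ ∈ P, y₀ ∈ Q, and for t ≥ 0, u_t ∈ P minimizes ⟨x_t − y_t, x⟩ over P, x_{t+1} = x_t + (2/(t+2))(u_t − x_t); v_t ∈ Q minimizes ⟨y_t − x_{t+1}, y⟩ over Q, y_{t+1} = y_t + (2/(t+2))(v_t − y_t). Then for every t with t > 4(1 + 2√2)(D_P² + D_Q²)(D_P + D_Q)² / dist(P, Q)⁴, one has min_{x ∈ P, y ∈ Q} ⟨x_t − y_t, x − y⟩ > 0, i.e., the hyperplane with normal x_t − y_t strictly separates P from Q. -/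
open RealInnerProductSpace Metric
open scoped Pointwise

/-!
Let `w⋆ = xs - ys`. Convexity of `P - Q` makes `w⋆` its minimal-norm point, so
`‖w⋆‖² ≤ ⟪w⋆, p - q⟫` on `P × Q`. The gap `gₜ = ‖xₜ - yₜ‖² - ‖w⋆‖²` satisfies the Frank–Wolfe
recursion `gₜ₊₁ ≤ (1 - γₜ) gₜ + γₜ² K` with `K = 2 D_P D_Q + (D_P + D_Q)²` (the term `2 D_P D_Q`
pays for the second minimization using `xₜ₊₁` instead of `xₜ`), hence `gₜ ≤ 4K / (t + 2)`.
As `⟪xₜ - yₜ, w⋆⟫ ≥ ‖w⋆‖²`, the error `eₜ = xₜ - yₜ - w⋆` has `‖eₜ‖² ≤ gₜ`, and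
`⟪xₜ - yₜ, p - q⟫ ≥ ‖w⋆‖² - ‖eₜ‖ (D_P + D_Q)`, which is positive past the threshold.
-/

theorem two_div_natCast_add_two_mem_Icc (n : ℕ) : 2 / ((n : ℝ) + 2) ∈ Set.Icc 0 1 := by
  refine ⟨by positivity, ?_⟩
  rw [div_le_one (by positivity)]
  linarith [n.cast_nonneg (α := ℝ)]

theorem norm_sub_le_diam {E : Type*} [SeminormedAddCommGroup E] {K : Set E}
    (hK : Bornology.IsBounded K) {a b : E} (ha : a ∈ K) (hb : b ∈ K) : ‖a - b‖ ≤ diam K :=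
  dist_eq_norm a b ▸ dist_le_diam_of_mem hK ha hb

section InnerProductSpace

variable {G : Type*} [NormedAddCommGroup G] [InnerProductSpace ℝ G]

theorem Convex.norm_sq_le_inner_of_isMinOn {K : Set G} (hK : Convex ℝ K) {a k : G}
    (ha : a ∈ K) (hmin : IsMinOn (‖·‖) K a) (hk : k ∈ K) : ‖a‖ ^ 2 ≤ ⟪a, k⟫ := by
  have hinf : ‖0 - a‖ = ⨅ b : K, ‖0 - (b : G)‖ := by
    simpa only [zero_sub, norm_neg] using (hmin.iInf_eq ha).symm
  have := (norm_eq_iInf_iff_real_inner_le_zero hK ha).mp hinf k hk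
  rw [zero_sub, inner_neg_left, inner_sub_right, real_inner_self_eq_norm_sq] at this
  linarith

theorem Convex.norm_sub_sq_le_inner_sub {P Q : Set G} (hP : Convex ℝ P) (hQ : Convex ℝ Q)
    {xs ys : G} (hxs : xs ∈ P) (hys : ys ∈ Q) (hmin : ∀ p ∈ P, ∀ q ∈ Q, ‖xs - ys‖ ≤ ‖p - q‖)
    {p q : G} (hp : p ∈ P) (hq : q ∈ Q) : ‖xs - ys‖ ^ 2 ≤ ⟪xs - ys, p - q⟫ :=
  (hP.sub hQ).norm_sq_le_inner_of_isMinOn (Set.sub_mem_sub hxs hys)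
    (isMinOn_iff.mpr <| by rintro _ ⟨p, hp, q, hq, rfl⟩; exact hmin p hp q hq)
    (Set.sub_mem_sub hp hq)

theorem norm_sub_sq_le_of_norm_sq_le_inner {a w : G} (h : ‖a‖ ^ 2 ≤ ⟪w, a⟫) :
    ‖w - a‖ ^ 2 ≤ ‖w‖ ^ 2 - ‖a‖ ^ 2 := by
  rw [norm_sub_sq_real]
  linarith

theorem norm_sq_sub_mul_le_inner {a c w : G} {C : ℝ} (hw : ‖a‖ ^ 2 ≤ ⟪w, a⟫)
    (hc : ‖a‖ ^ 2 ≤ ⟪a, c⟫) (hC : ‖c - a‖ ≤ C) : ‖a‖ ^ 2 - ‖w - a‖ * C ≤ ⟪w, c⟫ := by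
  have hsplit : ⟪w, c⟫ = ⟪w, a⟫ + (⟪a, c⟫ - ‖a‖ ^ 2) + ⟪w - a, c - a⟫ := by
    simp only [inner_sub_left, inner_sub_right, real_inner_self_eq_norm_sq]
    ring
  have hcs := abs_real_inner_le_norm (w - a) (c - a)
  have hCs := mul_le_mul_of_nonneg_left hC (norm_nonneg (w - a))
  linarith [neg_abs_le ⟪w - a, c - a⟫]

theorem Convex.mem_of_forall_eq_add_smul_sub {K : Set G} (hK : Convex ℝ K) {x u : ℕ → G}
    {γ : ℕ → ℝ} (hγ : ∀ n, γ n ∈ Set.Icc 0 1) (hx0 : x 0 ∈ K) (hu : ∀ n, u n ∈ K)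
    (hx : ∀ n, x (n + 1) = x n + γ n • (u n - x n)) (n : ℕ) : x n ∈ K := by
  induction n with
  | zero => exact hx0
  | succ n ih => exact hx n ▸ hK.add_smul_sub_mem ih (hu n) (hγ n)

theorem alm_step_norm_sq_sub_le {x y u v xs ys : G} {γ DP DQ : ℝ} (hγ : 0 ≤ γ)
    (hu : ⟪x - y, u⟫ ≤ ⟪x - y, xs⟫)
    (hv : ⟪y - (x + γ • (u - x)), v⟫ ≤ ⟪y - (x + γ • (u - x)), ys⟫)
    (hux : ‖u - x‖ ≤ DP) (hvy : ‖v - y‖ ≤ DQ) (hysv : ‖ys - v‖ ≤ DQ) :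
    ‖(x + γ • (u - x)) - (y + γ • (v - y))‖ ^ 2 - ‖xs - ys‖ ^ 2 ≤
      (1 - γ) * (‖x - y‖ ^ 2 - ‖xs - ys‖ ^ 2) + γ ^ 2 * (2 * DP * DQ + (DP + DQ) ^ 2) := by
  set w := x - y
  set a := u - x
  set b := v - y
  have hnext : (x + γ • a) - (y + γ • b) = w + γ • (a - b) := by
    simp only [w, a, b]
    module
  have hexp : ‖w + γ • (a - b)‖ ^ 2 = ‖w‖ ^ 2 + 2 * (γ * ⟪w, a - b⟫) + γ ^ 2 * ‖a - b‖ ^ 2 := by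
    rw [norm_add_sq_real, real_inner_smul_right, norm_smul, Real.norm_of_nonneg hγ, mul_pow]
  have hab : ⟪w, a - b⟫ = ⟪w, u⟫ - ⟪w, v⟫ - ‖w‖ ^ 2 := by
    rw [show a - b = (u - v) - w by simp only [w, a, b]; abel, inner_sub_right, inner_sub_right,
      real_inner_self_eq_norm_sq]
  have hwv : ⟪w, ys⟫ - γ * (DP * DQ) ≤ ⟪w, v⟫ := by
    have hlag : |⟪a, ys - v⟫| ≤ DP * DQ :=
      (abs_real_inner_le_norm a (ys - v)).trans
        (mul_le_mul hux hysv (norm_nonneg _) ((norm_nonneg a).trans hux))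
    rw [show y - (x + γ • a) = -(w + γ • a) by simp only [w]; abel, inner_neg_left, inner_neg_left,
      inner_add_left, inner_add_left, real_inner_smul_left, real_inner_smul_left] at hv
    rw [inner_sub_right] at hlag
    linarith [mul_le_mul_of_nonneg_left (neg_le_of_abs_le hlag) hγ]
  have hwd : ⟪w, xs - ys⟫ ≤ (‖w‖ ^ 2 + ‖xs - ys‖ ^ 2) / 2 := by
    nlinarith [real_inner_le_norm w (xs - ys), sq_nonneg (‖w‖ - ‖xs - ys‖)]
  have hdir : ⟪w, a - b⟫ ≤ (‖xs - ys‖ ^ 2 - ‖w‖ ^ 2) / 2 + γ * (DP * DQ) := by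
    rw [inner_sub_right] at hwd
    linarith
  have hlen : ‖a - b‖ ^ 2 ≤ (DP + DQ) ^ 2 :=
    pow_le_pow_left₀ (norm_nonneg _) ((norm_sub_le a b).trans (add_le_add hux hvy)) 2
  rw [hnext, hexp]
  linarith [mul_le_mul_of_nonneg_left hdir hγ, mul_le_mul_of_nonneg_left hlen (sq_nonneg γ)]

end InnerProductSpace

theorem le_four_mul_div_of_step_le {g : ℕ → ℝ} {K : ℝ} (hK : 0 ≤ K)
    (hg : ∀ n : ℕ, g (n + 1) ≤ (1 - 2 / ((n : ℝ) + 2)) * g n + (2 / ((n : ℝ) + 2)) ^ 2 * K)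
    {n : ℕ} (hn : 1 ≤ n) : g n ≤ 4 * K / ((n : ℝ) + 2) := by
  induction n, hn using Nat.le_induction with
  | base =>
    have := hg 0
    norm_num at this ⊢
    linarith
  | succ n hn ih =>
    have hγ : 0 ≤ 1 - 2 / ((n : ℝ) + 2) := sub_nonneg.mpr (two_div_natCast_add_two_mem_Icc n).2
    calc g (n + 1)
        ≤ (1 - 2 / ((n : ℝ) + 2)) * (4 * K / ((n : ℝ) + 2)) + (2 / ((n : ℝ) + 2)) ^ 2 * K :=
          (hg n).trans (by gcongr)
      _ = 4 * K * (n + 1) / (n + 2) ^ 2 := by field_simp; ring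
      _ ≤ 4 * K / ((↑(n + 1) : ℝ) + 2) := by
          push_cast
          rw [div_le_div_iff₀ (by positivity) (by positivity)]
          nlinarith

theorem mul_lt_sq_of_threshold_lt {DP DQ d e t : ℝ} (hd : 0 < d)
    (he : e ^ 2 ≤ 4 * (2 * DP * DQ + (DP + DQ) ^ 2) / (t + 2))
    (ht : t > 4 * (1 + 2 * √2) * (DP ^ 2 + DQ ^ 2) * (DP + DQ) ^ 2 / d ^ 4) :
    e * (DP + DQ) < d ^ 2 := by
  have hsqrt : 1 ≤ √2 := Real.one_le_sqrt.mpr (by norm_num)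
  have hK : 4 * (2 * DP * DQ + (DP + DQ) ^ 2) ≤ 4 * (1 + 2 * √2) * (DP ^ 2 + DQ ^ 2) := by
    nlinarith [sq_nonneg (DP - DQ), mul_le_mul_of_nonneg_left hsqrt
      (add_nonneg (sq_nonneg DP) (sq_nonneg DQ))]
  have ht0 : 0 ≤ t := le_trans (by positivity) ht.le
  rw [gt_iff_lt, div_lt_iff₀ (by positivity)] at ht
  rw [le_div_iff₀ (by positivity)] at he
  refine lt_of_pow_lt_pow_left₀ 2 (by positivity) ?_
  nlinarith [mul_le_mul_of_nonneg_right hK (sq_nonneg (DP + DQ)),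
    mul_le_mul_of_nonneg_right he (sq_nonneg (DP + DQ)), sq_nonneg (e * (DP + DQ))]

theorem alm_separating_hyperplane_general
    {G : Type*} [NormedAddCommGroup G] [InnerProductSpace ℝ G]
    (P Q : Set G)
    (hPcpt : IsCompact P) (hQcpt : IsCompact Q)
    (hPconv : Convex ℝ P) (hQconv : Convex ℝ Q)
    (hdisj : P ∩ Q = ∅)
    (DP DQ : ℝ) (hDP : Metric.diam P = DP) (hDQ : Metric.diam Q = DQ)
    (xs ys : G) (hxs : xs ∈ P) (hys : ys ∈ Q)
    (hmin : ∀ p ∈ P, ∀ q ∈ Q, ‖xs - ys‖ ≤ ‖p - q‖)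
    (x y u v : ℕ → G) (hx0 : x 0 ∈ P) (hy0 : y 0 ∈ Q)
    (humem : ∀ t : ℕ, u t ∈ P)
    (humin : ∀ t : ℕ, ∀ w ∈ P, ⟪x t - y t, u t⟫ ≤ ⟪x t - y t, w⟫)
    (hxupd : ∀ t : ℕ, x (t + 1) = x t + (2 / ((t : ℝ) + 2)) • (u t - x t))
    (hvmem : ∀ t : ℕ, v t ∈ Q)
    (hvmin : ∀ t : ℕ, ∀ w ∈ Q, ⟪y t - x (t + 1), v t⟫ ≤ ⟪y t - x (t + 1), w⟫)
    (hyupd : ∀ t : ℕ, y (t + 1) = y t + (2 / ((t : ℝ) + 2)) • (v t - y t)) :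
    ∀ t : ℕ,
      (t : ℝ) > 4 * (1 + 2 * Real.sqrt 2) * (DP ^ 2 + DQ ^ 2) * (DP + DQ) ^ 2 /
        ‖xs - ys‖ ^ 4 →
      ∀ p ∈ P, ∀ q ∈ Q, ⟪x t - y t, p - q⟫ > 0 := by
  have hd : 0 < ‖xs - ys‖ := norm_pos_iff.mpr <| sub_ne_zero.mpr fun h =>
    (Set.eq_empty_iff_forall_notMem.mp hdisj) xs ⟨hxs, h.symm ▸ hys⟩
  have hdiamP : ∀ a ∈ P, ∀ b ∈ P, ‖a - b‖ ≤ DP := fun a ha b hb =>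
    hDP ▸ norm_sub_le_diam hPcpt.isBounded ha hb
  have hdiamQ : ∀ a ∈ Q, ∀ b ∈ Q, ‖a - b‖ ≤ DQ := fun a ha b hb =>
    hDQ ▸ norm_sub_le_diam hQcpt.isBounded ha hb
  have hDP0 : 0 ≤ DP := hDP ▸ diam_nonneg
  have hDQ0 : 0 ≤ DQ := hDQ ▸ diam_nonneg
  have hxP :=
    hPconv.mem_of_forall_eq_add_smul_sub two_div_natCast_add_two_mem_Icc hx0 humem hxupd
  have hyQ :=
    hQconv.mem_of_forall_eq_add_smul_sub two_div_natCast_add_two_mem_Icc hy0 hvmem hyupd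
  have hmargin {p q : G} (hp : p ∈ P) (hq : q ∈ Q) :=
    hPconv.norm_sub_sq_le_inner_sub hQconv hxs hys hmin hp hq
  have hgap (n : ℕ) := alm_step_norm_sq_sub_le (by positivity) (humin n xs hxs)
    (hxupd n ▸ hvmin n ys hys) (hdiamP _ (humem n) _ (hxP n)) (hdiamQ _ (hvmem n) _ (hyQ n))
    (hdiamQ _ hys _ (hvmem n))
  simp only [← hxupd, ← hyupd] at hgap
  intro t ht p hp q hq
  have ht1 : 1 ≤ t := Nat.one_le_iff_ne_zero.mpr fun h0 => by
    subst h0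
    exact absurd ht (not_lt.mpr (by simp only [Nat.cast_zero]; positivity))
  have hw : ‖xs - ys‖ ^ 2 ≤ ⟪x t - y t, xs - ys⟫ := by
    rw [real_inner_comm]
    exact hmargin (hxP t) (hyQ t)
  have herr : ‖(x t - y t) - (xs - ys)‖ ^ 2 ≤ 4 * (2 * DP * DQ + (DP + DQ) ^ 2) / ((t : ℝ) + 2) :=
    (norm_sub_sq_le_of_norm_sq_le_inner hw).trans
      (le_four_mul_div_of_step_le (g := fun n => ‖x n - y n‖ ^ 2 - ‖xs - ys‖ ^ 2)
        (by positivity) hgap ht1)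
  have hspread : ‖(p - q) - (xs - ys)‖ ≤ DP + DQ := by
    rw [show (p - q) - (xs - ys) = (p - xs) - (q - ys) by abel]
    exact (norm_sub_le _ _).trans (add_le_add (hdiamP p hp xs hxs) (hdiamQ q hq ys hys))
  linarith [norm_sq_sub_mul_le_inner hw (hmargin hp hq) hspread,
    mul_lt_sq_of_threshold_lt hd herr ht]

/-- **Parameter-free separation certificate via Alternating Linear Minimizations.**
For disjoint compact convex `P`, `Q`, for every
`t > 4(1+2√2)(D_P²+D_Q²)(D_P+D_Q)²/dist(P,Q)⁴` one has
`min_{x ∈ P, y ∈ Q} ⟨x_t − y_t, x − y⟩ > 0`, i.e. `x_t − y_t` strictly separates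
`P` from `Q`. -/
theorem alm_separating_hyperplane
    {G : Type*} [NormedAddCommGroup G] [InnerProductSpace ℝ G]
    (P Q : Set G) (hPne : P.Nonempty) (hQne : Q.Nonempty)
    (hPcpt : IsCompact P) (hQcpt : IsCompact Q)
    (hPconv : Convex ℝ P) (hQconv : Convex ℝ Q)
    (hdisj : P ∩ Q = ∅)
    (DP DQ : ℝ) (hDP : Metric.diam P = DP) (hDQ : Metric.diam Q = DQ)
    (xs ys : G) (hxs : xs ∈ P) (hys : ys ∈ Q)
    (hmin : ∀ p ∈ P, ∀ q ∈ Q, ‖xs - ys‖ ≤ ‖p - q‖)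
    (x y u v : ℕ → G) (hx0 : x 0 ∈ P) (hy0 : y 0 ∈ Q)
    (humem : ∀ t : ℕ, u t ∈ P)
    (humin : ∀ t : ℕ, ∀ w ∈ P, ⟪x t - y t, u t⟫ ≤ ⟪x t - y t, w⟫)
    (hxupd : ∀ t : ℕ, x (t + 1) = x t + (2 / ((t : ℝ) + 2)) • (u t - x t))
    (hvmem : ∀ t : ℕ, v t ∈ Q)
    (hvmin : ∀ t : ℕ, ∀ w ∈ Q, ⟪y t - x (t + 1), v t⟫ ≤ ⟪y t - x (t + 1), w⟫)
    (hyupd : ∀ t : ℕ, y (t + 1) = y t + (2 / ((t : ℝ) + 2)) • (v t - y t)) :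
    ∀ t : ℕ,
      (t : ℝ) > 4 * (1 + 2 * Real.sqrt 2) * (DP ^ 2 + DQ ^ 2) * (DP + DQ) ^ 2 /
        ‖xs - ys‖ ^ 4 →
      ∀ p ∈ P, ∀ q ∈ Q, ⟪x t - y t, p - q⟫ > 0 :=
  alm_separating_hyperplane_general P Q hPcpt hQcpt hPconv hQconv hdisj DP DQ hDP hDQ xs ys hxs hys
    hmin x y u v hx0 hy0 humem humin hxupd hvmem hvmin hyupd
end

section
/- Let P and Q be nonempty compact convex sets in a real Hilbert space with diameters D_P and D_Q. Then for all z, x ∈ P and all w, y ∈ Q: ⟨z − w, x − y⟩ ≥ dist(P, Q)² − √(‖z − w‖² − dist(P, Q)²) · (D_P + D_Q). (Note that ‖z − w‖ ≥ dist(P, Q), so the square root is well-defined.) -/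
/-!
Let `v = x⋆ - y⋆` join a closest pair. The first-order optimality conditions of `x⋆` and `y⋆`
say that the hyperplanes through them orthogonal to `v` separate `P` from `Q`, so
`‖v‖² ≤ ⟪v, p - q⟫` for all `p ∈ P`, `q ∈ Q`. Write `⟪u, d⟫ = ⟪v, d⟫ + ⟪u - v, v⟫ + ⟪u - v, d - v⟫`
for `u = z - w` and `d = x - y`: the first term is at least `‖v‖²`, the second is nonnegative,
and in the third `‖u - v‖² ≤ ‖u‖² - ‖v‖²` while `‖d - v‖ ≤ D_P + D_Q`.
-/

open RealInnerProductSpace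

section InnerProductSpace

variable {H : Type*} [NormedAddCommGroup H] [InnerProductSpace ℝ H]

theorem real_inner_sub_le_zero_of_forall_norm_sub_le {K : Set H} (hK : Convex ℝ K) {u v : H}
    (hv : v ∈ K) (hmin : ∀ w ∈ K, ‖u - v‖ ≤ ‖u - w‖) : ∀ w ∈ K, ⟪u - v, w - v⟫ ≤ 0 := by
  rw [← norm_eq_iInf_iff_real_inner_le_zero hK hv]
  have : Nonempty K := ⟨⟨v, hv⟩⟩
  exact le_antisymm (le_ciInf fun w => hmin w w.2)
    (ciInf_le ⟨0, fun _ ⟨_, h⟩ => h ▸ norm_nonneg _⟩ (⟨v, hv⟩ : K))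

theorem norm_sq_le_real_inner_of_isClosestPair {P Q : Set H} (hP : Convex ℝ P) (hQ : Convex ℝ Q)
    {x₀ y₀ : H} (hx₀ : x₀ ∈ P) (hy₀ : y₀ ∈ Q) (hmin : ∀ p ∈ P, ∀ q ∈ Q, ‖x₀ - y₀‖ ≤ ‖p - q‖) :
    ∀ p ∈ P, ∀ q ∈ Q, ‖x₀ - y₀‖ ^ 2 ≤ ⟪x₀ - y₀, p - q⟫ := by
  intro p hp q hq
  have hPopt : ⟪y₀ - x₀, p - x₀⟫ ≤ 0 :=
    real_inner_sub_le_zero_of_forall_norm_sub_le hP hx₀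
      (fun p' hp' => by simpa only [norm_sub_rev y₀] using hmin p' hp' y₀ hy₀) p hp
  have hQopt : ⟪x₀ - y₀, q - y₀⟫ ≤ 0 :=
    real_inner_sub_le_zero_of_forall_norm_sub_le hQ hy₀ (hmin x₀ hx₀) q hq
  have hsplit : ⟪x₀ - y₀, p - q⟫ =
      -⟪y₀ - x₀, p - x₀⟫ + ‖x₀ - y₀‖ ^ 2 - ⟪x₀ - y₀, q - y₀⟫ := by
    rw [← real_inner_self_eq_norm_sq, ← neg_sub x₀ y₀, inner_neg_left, neg_neg,
      ← inner_add_right, ← inner_sub_right]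
    congr 1
    abel
  linarith

theorem norm_sub_sq_le_of_norm_sq_le_real_inner {u v : H} (h : ‖v‖ ^ 2 ≤ ⟪v, u⟫) :
    ‖u - v‖ ^ 2 ≤ ‖u‖ ^ 2 - ‖v‖ ^ 2 := by
  rw [norm_sub_sq_real, real_inner_comm]
  linarith

theorem sub_sqrt_mul_le_real_inner {u v d : H} {D : ℝ} (hvu : ‖v‖ ^ 2 ≤ ⟪v, u⟫)
    (hvd : ‖v‖ ^ 2 ≤ ⟪v, d⟫) (hd : ‖d - v‖ ≤ D) :
    ‖v‖ ^ 2 - √(‖u‖ ^ 2 - ‖v‖ ^ 2) * D ≤ ⟪u, d⟫ := by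
  have hsplit : ⟪u, d⟫ = ⟪v, d⟫ + ⟪u - v, v⟫ + ⟪u - v, d - v⟫ := by
    rw [add_assoc, ← inner_add_right, add_sub_cancel, ← inner_add_left, add_sub_cancel]
  have hcross : 0 ≤ ⟪u - v, v⟫ := by
    rw [inner_sub_left, real_inner_self_eq_norm_sq, real_inner_comm]
    linarith
  have huv : ‖u - v‖ ≤ √(‖u‖ ^ 2 - ‖v‖ ^ 2) :=
    Real.le_sqrt_of_sq_le (norm_sub_sq_le_of_norm_sq_le_real_inner hvu)
  have hrest : -(√(‖u‖ ^ 2 - ‖v‖ ^ 2) * D) ≤ ⟪u - v, d - v⟫ := by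
    calc -(√(‖u‖ ^ 2 - ‖v‖ ^ 2) * D) ≤ -(‖u - v‖ * ‖d - v‖) := by gcongr
      _ ≤ ⟪u - v, d - v⟫ := by
          rw [neg_le, ← inner_neg_right]
          simpa only [norm_neg] using real_inner_le_norm (u - v) (-(d - v))
  linarith

end InnerProductSpace

theorem inner_ge_dist_sq_sub_sqrt_general
    {H : Type*} [NormedAddCommGroup H] [InnerProductSpace ℝ H]
    (P Q : Set H)
    (hPcpt : IsCompact P) (hQcpt : IsCompact Q)
    (hPconv : Convex ℝ P) (hQconv : Convex ℝ Q)
    (DP DQ : ℝ) (hDP : Metric.diam P = DP) (hDQ : Metric.diam Q = DQ)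
    (xstar ystar : H) (hxstar : xstar ∈ P) (hystar : ystar ∈ Q)
    (hmin : ∀ p ∈ P, ∀ q ∈ Q, ‖xstar - ystar‖ ≤ ‖p - q‖) :
    ∀ z ∈ P, ∀ w ∈ Q, ∀ x ∈ P, ∀ y ∈ Q,
      ⟪z - w, x - y⟫ ≥ ‖xstar - ystar‖ ^ 2 -
        Real.sqrt (‖z - w‖ ^ 2 - ‖xstar - ystar‖ ^ 2) * (DP + DQ) := by
  intro z hz w hw x hx y hy
  have hsep := norm_sq_le_real_inner_of_isClosestPair hPconv hQconv hxstar hystar hmin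
  have hdiam : ‖(x - y) - (xstar - ystar)‖ ≤ DP + DQ := by
    rw [← hDP, ← hDQ, show (x - y) - (xstar - ystar) = (x - xstar) + (ystar - y) by abel]
    refine (norm_add_le _ _).trans (add_le_add ?_ ?_) <;> rw [← dist_eq_norm]
    exacts [Metric.dist_le_diam_of_mem hPcpt.isBounded hx hxstar,
      Metric.dist_le_diam_of_mem hQcpt.isBounded hystar hy]
  exact sub_sqrt_mul_le_real_inner (hsep z hz w hw) (hsep x hx y hy) hdiam

/-- For compact convex sets `P`, `Q` in a real Hilbert space with diameters `D_P`,
`D_Q`, for all `z, x ∈ P` and `w, y ∈ Q`: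
`⟨z − w, x − y⟩ ≥ dist(P,Q)² − √(‖z − w‖² − dist(P,Q)²)·(D_P + D_Q)`. -/
theorem inner_ge_dist_sq_sub_sqrt
    {H : Type*} [NormedAddCommGroup H] [InnerProductSpace ℝ H] [CompleteSpace H]
    (P Q : Set H) (hPne : P.Nonempty) (hQne : Q.Nonempty)
    (hPcpt : IsCompact P) (hQcpt : IsCompact Q)
    (hPconv : Convex ℝ P) (hQconv : Convex ℝ Q)
    (DP DQ : ℝ) (hDP : Metric.diam P = DP) (hDQ : Metric.diam Q = DQ)
    (xstar ystar : H) (hxstar : xstar ∈ P) (hystar : ystar ∈ Q)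
    (hmin : ∀ p ∈ P, ∀ q ∈ Q, ‖xstar - ystar‖ ≤ ‖p - q‖) :
    ∀ z ∈ P, ∀ w ∈ Q, ∀ x ∈ P, ∀ y ∈ Q,
      ⟪z - w, x - y⟫ ≥ ‖xstar - ystar‖ ^ 2 -
        Real.sqrt (‖z - w‖ ^ 2 - ‖xstar - ystar‖ ^ 2) * (DP + DQ) :=
  inner_ge_dist_sq_sub_sqrt_general P Q hPcpt hQcpt hPconv hQconv DP DQ hDP hDQ xstar ystar hxstar
    hystar hmin
end
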